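/- If π ∈ S_n has π_1 = i and π' is the reduction to {1,...,n−1} of the beheaded permutation π_2...π_n, then with weight(π) := q^{N_{[1,2,3]}(π)} · Π x_i^{c_i(π)} (where c_i(π) counts pairs a<b with π_a = i < π_b), one has weight(π) = x_i^{n-i} · weight(π') under the substitution x_j → q·x_{j+1} for j = i,...,n−1 applied to weight(π'). -/

import Mathlib

/-!
Write `i = π 0`. Reduction undoes the deletion of the value `i`: `π (a + 1) = i.succAbove (π' a)`,
and `succAbove` is strictly monotone, so entries after the first compare as in `π'`. Hence
`c_i(π) = #{b | i < π b} = n - i` and `c_{i.succAbove j}(π) = c_j(π')`. An occurrence of `123` in `π`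
either avoids the first position, and is one in `π'`, or starts there, and then its last two
entries form a pair counted by `c_j(π')` with `j ≥ i`. These are exactly the extra powers of `q`
produced by the substitution, which sends `x_j` to `x_{i.succAbove j}`, times `q` when `j ≥ i`.
-/

open Finset

/-- Number of occurrences of the increasing pattern [1,2,3] in `π`. -/
def N3 {n : ℕ} (π : Equiv.Perm (Fin n)) : ℕ :=
  (Finset.univ.filter fun t : Fin n × Fin n × Fin n =>
    t.1 < t.2.1 ∧ t.2.1 < t.2.2 ∧ π t.1 < π t.2.1 ∧ π t.2.1 < π t.2.2).card

/-- `c π i` = number of pairs a < b with π(a) = i < π(b). -/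
def c {n : ℕ} (π : Equiv.Perm (Fin n)) (i : Fin n) : ℕ :=
  (Finset.univ.filter fun p : Fin n × Fin n => p.1 < p.2 ∧ π p.1 = i ∧ i < π p.2).card

theorem apply_succ_eq_succAbove_of_reduction {n : ℕ} (π : Equiv.Perm (Fin (n + 1)))
    (π' : Equiv.Perm (Fin n)) (hred : ∀ a b : Fin n, π' a < π' b ↔ π a.succ < π b.succ)
    (a : Fin n) : π a.succ = (π 0).succAbove (π' a) := by
  set g : Fin n → Fin (n + 1) := (π ∘ Fin.succ) ∘ π'.symm
  have hg : StrictMono g := fun k l hkl => by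
    simpa [g] using (hred (π'.symm k) (π'.symm l)).1 (by simpa using hkl)
  -- Both are strictly monotone enumerations of the complement of `{π 0}`.
  have hrange : Set.range g = Set.range (π 0).succAbove := by
    rw [π'.symm.surjective.range_comp, Set.range_comp, Fin.range_succ,
      Set.image_compl_eq π.bijective, Set.image_singleton, Fin.range_succAbove]
  have hg_eq := (hg.range_inj (Fin.strictMono_succAbove (π 0))).1 hrange
  simpa [g] using congrFun hg_eq (π' a)

theorem c_apply_zero {n : ℕ} (π : Equiv.Perm (Fin (n + 1))) : c π (π 0) = n - π 0 := by
  have hpos : ∀ b, π 0 < π b → 0 < b := fun b h =>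
    Fin.pos_of_ne_zero (by rintro rfl; exact lt_irrefl _ h)
  simp only [c, card_filter, Fintype.sum_prod_type, EmbeddingLike.apply_eq_iff_eq]
  rw [Fintype.sum_eq_single 0 fun a ha => by simp [ha]]
  simp only [true_and, and_iff_right_of_imp (hpos _)]
  rw [Equiv.sum_comp π fun v => if π 0 < v then 1 else 0, ← card_filter, filter_lt_eq_Ioi,
    Fin.card_Ioi]
  omega

theorem c_succAbove {n : ℕ} (π : Equiv.Perm (Fin (n + 1))) (π' : Equiv.Perm (Fin n))
    (hπ : ∀ a : Fin n, π a.succ = (π 0).succAbove (π' a)) (j : Fin n) :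
    c π ((π 0).succAbove j) = c π' j := by
  simp only [c, card_filter, Fintype.sum_prod_type, Fin.sum_univ_succ, hπ, Fin.not_lt_zero,
    Fin.succ_lt_succ_iff, Fin.succAbove_right_inj, Fin.succAbove_lt_succAbove_iff, Fin.succ_pos]
  simp

theorem sum_c_filter {n : ℕ} (σ : Equiv.Perm (Fin n)) (P : Fin n → Prop) [DecidablePred P] :
    ∑ j with P j, c σ j = #{p : Fin n × Fin n | p.1 < p.2 ∧ P (σ p.1) ∧ σ p.1 < σ p.2} := by
  simp only [c, card_filter]
  rw [sum_comm]
  refine sum_congr rfl fun p _ => ?_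
  rw [sum_filter, Fintype.sum_eq_single (σ p.1) fun j hj => by simp [Ne.symm hj]]
  by_cases h : P (σ p.1) <;> simp [h]

theorem N3_eq_add_sum_c {n : ℕ} (π : Equiv.Perm (Fin (n + 1))) (π' : Equiv.Perm (Fin n))
    (hπ : ∀ a : Fin n, π a.succ = (π 0).succAbove (π' a)) :
    N3 π = N3 π' + ∑ j with π 0 ≤ j.castSucc, c π' j := by
  rw [sum_c_filter]
  simp only [N3, card_filter, Fintype.sum_prod_type, Fin.sum_univ_succ, hπ, Fin.not_lt_zero,
    Fin.succ_lt_succ_iff, Fin.succAbove_lt_succAbove_iff, Fin.succ_pos,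
    Fin.lt_succAbove_iff_le_castSucc, false_and, and_false, true_and, if_false, zero_add,
    sum_const_zero]
  exact Nat.add_comm _ _

theorem ite_castSucc_succ_eq_mul_succAbove {R : Type*} [MulOneClass R] {n : ℕ}
    (x : Fin (n + 1) → R) (q : R) (i : Fin (n + 1)) (j : Fin n) :
    (if (j : ℕ) < i then x j.castSucc else q * x j.succ) =
      (if i ≤ j.castSucc then q else 1) * x (i.succAbove j) := by
  by_cases h : i ≤ j.castSucc
  · rw [if_neg (by simpa [Fin.le_def] using h), if_pos h, Fin.succAbove_of_le_castSucc _ _ h]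
  · rw [not_le] at h
    rw [if_pos (by simpa [Fin.lt_def] using h), if_neg h.not_ge, one_mul,
      Fin.succAbove_of_castSucc_lt _ _ h]

/-- If `π'` is the reduction of the beheaded permutation of `π`, then
`weight(π) = x_i^{n-i} · weight(π')` under the substitution `x_j → q·x_{j+1}` for `j ≥ i`. -/
theorem weight_behead_reduction (n : ℕ) (q : ℝ) (x : Fin (n + 1) → ℝ)
    (π : Equiv.Perm (Fin (n + 1))) (π' : Equiv.Perm (Fin n))
    (hred : ∀ a b : Fin n, π' a < π' b ↔ π a.succ < π b.succ) :
    q ^ N3 π * ∏ j, x j ^ c π j =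
      x (π 0) ^ (n - ((π 0 : Fin (n + 1)) : ℕ)) *
        (q ^ N3 π' * ∏ j : Fin n,
          (if (j : ℕ) < ((π 0 : Fin (n + 1)) : ℕ) then x j.castSucc else q * x j.succ) ^
            c π' j) := by
  have hπ := apply_succ_eq_succAbove_of_reduction π π' hred
  simp_rw [Fin.prod_univ_succAbove (fun j => x j ^ c π j) (π 0), c_apply_zero,
    c_succAbove π π' hπ, N3_eq_add_sum_c π π' hπ, ite_castSucc_succ_eq_mul_succAbove, mul_pow,
    prod_mul_distrib, ite_pow, one_pow, ← prod_filter, prod_pow_eq_pow_sum, pow_add]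
  ring
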